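/- arXiv:1401.1657 — 5 statements merged into one kernel-verified Lean document; each statement's English description precedes it below -/
import Mathlib

section
/- Let D ⊆ ℂⁿ be a domain, f : 𝔻 → D holomorphic, and F : D → 𝔻 holomorphic such that F ∘ f is a Blaschke product of degree m. Then f is (m+1)-extremal: for any m+1 distinct points λ₁,…,λ_{m+1} ∈ 𝔻 there is no holomorphic map g defined on a neighborhood of the closed disc with values in D satisfying g(λⱼ) = f(λⱼ) for all j. -/
open Complex Metric Set

noncomputable section

/-- The open unit disc in `ℂ`. -/
def 𝔻 : Set ℂ := Metric.ball 0 1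

/-- `B` is a Blaschke product of degree `m` on the unit disc: a unimodular constant
times a product of `m` Möbius factors. -/
def IsBlaschke (m : ℕ) (B : ℂ → ℂ) : Prop :=
  ∃ (ω : ℂ) (a : Fin m → ℂ), ‖ω‖ = 1 ∧ (∀ j, a j ∈ 𝔻) ∧
    ∀ z ∈ 𝔻, B z = ω * ∏ j, (a j - z) / (1 - (starRingEnd ℂ) (a j) * z)

variable {E : Type*} [NormedAddCommGroup E] [NormedSpace ℂ E]

/-- The interpolation data `lam j ↦ f (lam j)` is extremally solvable (through `f`):
no map holomorphic on a neighbourhood of the closed unit disc with values in `D`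
interpolates `f` at the points `lam j`. -/
def ExtSolv (D : Set E) {m : ℕ} (lam : Fin m → ℂ) (f : ℂ → E) : Prop :=
  ¬ ∃ (U : Set ℂ) (g : ℂ → E), IsOpen U ∧ Metric.closedBall (0 : ℂ) 1 ⊆ U ∧
      DifferentiableOn ℂ g U ∧ (∀ z ∈ U, g z ∈ D) ∧ ∀ j, g (lam j) = f (lam j)

/-- `f : 𝔻 → D` is a weak `m`-extremal with respect to the distinct points `lam`. -/
def IsWeakExtremal (D : Set E) {m : ℕ} (lam : Fin m → ℂ) (f : ℂ → E) : Prop :=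
  DifferentiableOn ℂ f 𝔻 ∧ (∀ z ∈ 𝔻, f z ∈ D) ∧ ExtSolv D lam f

/-- `f : 𝔻 → D` is `m`-extremal: for all choices of `m` distinct points of `𝔻` the
corresponding interpolation data is extremally solvable. -/
def IsMExtremal (D : Set E) (m : ℕ) (f : ℂ → E) : Prop :=
  DifferentiableOn ℂ f 𝔻 ∧ (∀ z ∈ 𝔻, f z ∈ D) ∧
    ∀ lam : Fin m → ℂ, Function.Injective lam → (∀ j, lam j ∈ 𝔻) → ExtSolv D lam f

/-- The Minkowski functional of a set `D`. -/
def mink (D : Set E) (z : E) : ℝ := sInf {t : ℝ | 0 < t ∧ ((t : ℂ))⁻¹ • z ∈ D}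

/-- `φ` is a holomorphic automorphism of `D`. -/
def IsAutomorphismOf (D : Set E) (φ : E → E) : Prop :=
  DifferentiableOn ℂ φ D ∧ Set.MapsTo φ D D ∧
    ∃ ψ : E → E, DifferentiableOn ℂ ψ D ∧ Set.MapsTo ψ D D ∧
      (∀ z ∈ D, ψ (φ z) = z) ∧ (∀ z ∈ D, φ (ψ z) = z)

/-- The group of holomorphic automorphisms of `D` acts transitively. -/
def Homogeneous (D : Set E) : Prop :=
  ∀ z ∈ D, ∀ w ∈ D, ∃ φ : E → E, IsAutomorphismOf D φ ∧ φ z = w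

/-- `f` is an `m`-complex geodesic of `D`: there is `F ∈ 𝒪(D, 𝔻)` such that `F ∘ f` is a
non-constant Blaschke product of degree at most `m - 1`. -/
def IsComplexGeodesicOfOrder (D : Set E) (m : ℕ) (f : ℂ → E) : Prop :=
  DifferentiableOn ℂ f 𝔻 ∧ (∀ z ∈ 𝔻, f z ∈ D) ∧
    ∃ F : E → ℂ, DifferentiableOn ℂ F D ∧ (∀ z ∈ D, F z ∈ 𝔻) ∧
      ∃ k : ℕ, 1 ≤ k ∧ k ≤ m - 1 ∧ ∃ B : ℂ → ℂ, IsBlaschke k B ∧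
        ∀ z ∈ 𝔻, F (f z) = B z

/-- The sub-mean-value property on circles, for a real function on a subset of `ℂ`. -/
def SubmeanOn (u : ℂ → ℝ) (S : Set ℂ) : Prop :=
  ∀ (c : ℂ) (r : ℝ), 0 < r → Metric.closedBall c r ⊆ S →
    u c ≤ (2 * Real.pi)⁻¹ * ∫ θ in (0:ℝ)..(2 * Real.pi), u (c + r * Complex.exp (θ * Complex.I))

/-- `u` is plurisubharmonic on `D`: upper semicontinuous and submean on every complex line. -/
def PlurisubharmonicOn (u : E → ℝ) (D : Set E) : Prop :=
  UpperSemicontinuousOn u D ∧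
    ∀ (z v : E), SubmeanOn (fun w : ℂ => u (z + w • v)) {w : ℂ | z + w • v ∈ D}

/-- Hartogs pseudoconvexity: `- log dist(·, ∂D)` is plurisubharmonic on `D`. -/
def IsPseudoconvex (D : Set E) : Prop :=
  PlurisubharmonicOn (fun z => - Real.log (Metric.infDist z Dᶜ)) D

/-!
Schur's algorithm. Write the Blaschke product as `c p / p^♯`, where `‖c‖ = 1`, `deg p ≤ m` and
`p^♯(z) = z ^ m * conj (p (1 / conj z))`. Suppose `h = F ∘ g` is holomorphic near the closed disc,
maps into `𝔻` and agrees with `c p / p^♯` at `m + 1` distinct points. Take one of them, `l`, and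
let `α = h l`. Then `(mobius α ∘ h) / mobius l` has a removable singularity at `l`. It again maps a
neighbourhood of the closed disc into `𝔻`: on `‖z‖ ≥ 1` we have `‖1 - conj l * z‖ ≤ ‖l - z‖`, and
the maximum principle does the rest. On the polynomial side, `α p^♯ - c p` vanishes at `l`, so it
equals `(X - l) s`, and its reflection is `(1 - conj l X) s^♯`. Hence the new map agrees with
`conj c * s / s^♯`, where `deg s ≤ m - 1`, at the remaining `m` points. After `m` steps `h` agrees
with a unimodular constant at some point of the disc, which is impossible.
-/

open Polynomial ComplexConjugate

/-- `conjReflect N p` is the polynomial `z ↦ z ^ N * conj (p (1 / conj z))`. -/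
def conjReflect (N : ℕ) (p : ℂ[X]) : ℂ[X] := (p.map (starRingEnd ℂ)).reflect N

@[simp]
lemma conjReflect_conjReflect (N : ℕ) (p : ℂ[X]) : conjReflect N (conjReflect N p) = p := by
  simp [conjReflect, reflect_map, Polynomial.map_map]

lemma conjReflect_C_mul_sub_C_mul (N : ℕ) (a b : ℂ) (p q : ℂ[X]) :
    conjReflect N (C a * p - C b * q) =
      C (conj a) * conjReflect N p - C (conj b) * conjReflect N q := by
  simp [conjReflect, Polynomial.map_sub, reflect_sub, reflect_C_mul]

lemma natDegree_conjReflect_le {N : ℕ} {p : ℂ[X]} (hp : p.natDegree ≤ N) :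
    (conjReflect N p).natDegree ≤ N :=
  natDegree_reflect_le.trans (max_le le_rfl (natDegree_map_le.trans hp))

lemma conjReflect_C (c : ℂ) : conjReflect 0 (C c) = C (conj c) := by
  simp [conjReflect]

lemma conjReflect_X_sub_C_mul {N : ℕ} (a : ℂ) {s : ℂ[X]} (hs : s.natDegree ≤ N) :
    conjReflect (N + 1) ((X - C a) * s) = (1 - C (conj a) * X) * conjReflect N s := by
  rw [conjReflect, Polynomial.map_mul, add_comm, reflect_mul _ _ (natDegree_map_le.trans ?_)
    (natDegree_map_le.trans hs)]
  · simp [conjReflect, reflect_sub, reflect_C]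
  · exact natDegree_X_sub_C_le _

lemma conjReflect_prod_X_sub_C {m : ℕ} (a : Fin m → ℂ) :
    conjReflect m (∏ j, (X - C (a j))) = ∏ j, (1 - C (conj (a j)) * X) := by
  induction m with
  | zero => simp [conjReflect]
  | succ m ih =>
    rw [Fin.prod_univ_succ, Fin.prod_univ_succ, conjReflect_X_sub_C_mul _
      ((natDegree_prod_le _ _).trans (by simp)), ih]

lemma norm_one_sub_conj_mul_sq_sub_norm_sub_sq (a z : ℂ) :
    ‖1 - conj a * z‖ ^ 2 - ‖a - z‖ ^ 2 = (1 - ‖a‖ ^ 2) * (1 - ‖z‖ ^ 2) := by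
  have key : ((‖1 - conj a * z‖ ^ 2 - ‖a - z‖ ^ 2 : ℝ) : ℂ) =
      (((1 - ‖a‖ ^ 2) * (1 - ‖z‖ ^ 2) : ℝ) : ℂ) := by
    simp only [Complex.ofReal_sub, Complex.ofReal_mul, Complex.ofReal_one, Complex.ofReal_pow,
      ← Complex.mul_conj', map_sub, map_mul, map_one, Complex.conj_conj]
    ring
  exact_mod_cast key

lemma norm_sub_lt_norm_one_sub_conj_mul {a z : ℂ} (ha : ‖a‖ < 1) (hz : ‖z‖ < 1) :
    ‖a - z‖ < ‖1 - conj a * z‖ := by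
  have h := norm_one_sub_conj_mul_sq_sub_norm_sub_sq a z
  have : 0 < (1 - ‖a‖ ^ 2) * (1 - ‖z‖ ^ 2) := by
    apply mul_pos <;> nlinarith [norm_nonneg a, norm_nonneg z]
  exact lt_of_pow_lt_pow_left₀ 2 (norm_nonneg _) (by linarith)

lemma norm_one_sub_conj_mul_le_norm_sub {a z : ℂ} (ha : ‖a‖ ≤ 1) (hz : 1 ≤ ‖z‖) :
    ‖1 - conj a * z‖ ≤ ‖a - z‖ := by
  have h := norm_one_sub_conj_mul_sq_sub_norm_sub_sq a z
  have : (1 - ‖a‖ ^ 2) * (1 - ‖z‖ ^ 2) ≤ 0 := by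
    apply mul_nonpos_of_nonneg_of_nonpos <;> nlinarith [norm_nonneg a, norm_nonneg z]
  exact le_of_pow_le_pow_left₀ two_ne_zero (norm_nonneg _) (by linarith)

lemma one_sub_conj_mul_ne_zero {a w : ℂ} (ha : a ∈ 𝔻) (hw : w ∈ 𝔻) : 1 - conj a * w ≠ 0 := by
  rw [𝔻, mem_ball_zero_iff] at ha hw
  exact norm_pos_iff.mp ((norm_nonneg _).trans_lt (norm_sub_lt_norm_one_sub_conj_mul ha hw))

def mobius (a w : ℂ) : ℂ := (a - w) / (1 - conj a * w)

lemma mobius_mem_disc {a w : ℂ} (ha : a ∈ 𝔻) (hw : w ∈ 𝔻) : mobius a w ∈ 𝔻 := by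
  rw [𝔻, mem_ball_zero_iff] at ha hw ⊢
  have hlt := norm_sub_lt_norm_one_sub_conj_mul ha hw
  rw [mobius, norm_div, div_lt_one ((norm_nonneg _).trans_lt hlt)]
  exact hlt

@[simp]
lemma mobius_self (a : ℂ) : mobius a a = 0 := by simp [mobius]

lemma norm_lt_one_of_mul_sub_eq {k l w z : ℂ} (hl : l ∈ 𝔻) (hw : w ∈ 𝔻) (hz : 1 ≤ ‖z‖)
    (hk : k * (l - z) = w * (1 - conj l * z)) : ‖k‖ < 1 := by
  have hl1 : ‖l‖ < 1 := mem_ball_zero_iff.mp hl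
  have hlz : 0 < ‖l - z‖ := norm_pos_iff.mpr (sub_ne_zero.mpr (by rintro rfl; linarith))
  have : ‖k‖ * ‖l - z‖ < 1 * ‖l - z‖ := calc
    ‖k‖ * ‖l - z‖ = ‖w‖ * ‖1 - conj l * z‖ := by rw [← norm_mul, hk, norm_mul]
    _ ≤ ‖w‖ * ‖l - z‖ := by gcongr; exact norm_one_sub_conj_mul_le_norm_sub hl1.le hz
    _ < 1 * ‖l - z‖ := by gcongr; exact mem_ball_zero_iff.mp hw
  exact lt_of_mul_lt_mul_right this hlz.le

lemma norm_lt_of_forall_mem_sphere_norm_lt {F : Type*} [NormedAddCommGroup F] [NormedSpace ℂ F]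
    {f : ℂ → F} {c : ℂ} {r C : ℝ} (hr : 0 < r) (hf : DifferentiableOn ℂ f (closedBall c r))
    (hsphere : ∀ z ∈ sphere c r, ‖f z‖ < C) : ∀ z ∈ closedBall c r, ‖f z‖ < C := by
  have hcl : closure (ball c r) = closedBall c r := closure_ball c hr.ne'
  obtain ⟨z₀, hz₀, hmax⟩ := Complex.exists_mem_frontier_isMaxOn_norm isBounded_ball
    (nonempty_ball.mpr hr) (DifferentiableOn.diffContOnCl (hcl ▸ hf))
  rw [frontier_ball c hr.ne'] at hz₀
  rw [hcl] at hmax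
  exact fun z hz => (hmax hz).out.trans_lt (hsphere z₀ hz₀)

lemma exists_schur_quotient {h : ℂ → ℂ} {ρ : ℝ} (hρ : 1 < ρ)
    (hd : DifferentiableOn ℂ h (ball 0 ρ)) (hmaps : MapsTo h (ball 0 ρ) 𝔻) {l : ℂ}
    (hl : l ∈ 𝔻) :
    ∃ ρ' > 1, ∃ h₁ : ℂ → ℂ, DifferentiableOn ℂ h₁ (ball 0 ρ') ∧ MapsTo h₁ (ball 0 ρ') 𝔻 ∧
      ∀ z, h₁ z * (l - z) = mobius (h l) (h z) * (1 - conj l * z) := by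
  have hlρ : l ∈ ball (0 : ℂ) ρ := ball_subset_ball hρ.le hl
  set g : ℂ → ℂ := fun z => mobius (h l) (h z) * (1 - conj l * z)
  have hg : DifferentiableOn ℂ g (ball 0 ρ) := by
    refine DifferentiableOn.mul ?_ (by fun_prop)
    exact ((differentiableOn_const _).sub hd).div ((differentiableOn_const _).sub
      ((differentiableOn_const _).mul hd))
      fun z hz => one_sub_conj_mul_ne_zero (hmaps hlρ) (hmaps hz)
  set h₁ : ℂ → ℂ := fun z => -dslope g l z
  have hh₁ : DifferentiableOn ℂ h₁ (ball 0 ρ) :=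
    ((Complex.differentiableOn_dslope (isOpen_ball.mem_nhds hlρ)).mpr hg).neg
  have hquot : ∀ z, h₁ z * (l - z) = g z := by
    intro z
    rcases eq_or_ne z l with rfl | hzl
    · simp [g]
    · have hzl' : z - l ≠ 0 := sub_ne_zero.mpr hzl
      simp only [h₁, dslope_of_ne g hzl, slope_def_field, g, mobius_self, zero_mul, sub_zero]
      field_simp
      ring
  have hannulus : ∀ z ∈ ball (0 : ℂ) ρ, 1 ≤ ‖z‖ → ‖h₁ z‖ < 1 := fun z hz hz1 =>
    norm_lt_one_of_mul_sub_eq hl (mobius_mem_disc (hmaps hlρ) (hmaps hz)) hz1 (hquot z)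
  have hsub : closedBall (0 : ℂ) ((1 + ρ) / 2) ⊆ ball 0 ρ := closedBall_subset_ball (by linarith)
  have hclosed := norm_lt_of_forall_mem_sphere_norm_lt (by linarith) (hh₁.mono hsub)
    fun z hz => hannulus z (hsub (sphere_subset_closedBall hz))
      (by rw [mem_sphere_zero_iff_norm.mp hz]; linarith)
  refine ⟨(1 + ρ) / 2, by linarith, h₁, hh₁.mono (ball_subset_closedBall.trans hsub),
    fun z hz => mem_ball_zero_iff.mpr (hclosed z (ball_subset_closedBall hz)), hquot⟩

lemma schur_interpolation_step {ω α H P Q S S' H₁ l z : ℂ} (hω : ‖ω‖ = 1)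
    (hα : α ∈ 𝔻) (hH : H ∈ 𝔻) (hQ : Q ≠ 0) (hzl : z ≠ l) (hHQ : H * Q = ω * P)
    (hr : α * Q - ω * P = (z - l) * S)
    (hr' : conj α * P - conj ω * Q = (1 - conj l * z) * S')
    (hH₁ : H₁ * (l - z) = mobius α H * (1 - conj l * z)) :
    S' ≠ 0 ∧ H₁ * S' = conj ω * S := by
  have hωω : ω * conj ω = 1 := by
    rw [Complex.mul_conj, Complex.normSq_eq_norm_sq, hω]; norm_num
  have hD : 1 - conj α * H ≠ 0 := one_sub_conj_mul_ne_zero hα hH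
  have hkey : (1 - conj l * z) * S' = -(conj ω * Q * (1 - conj α * H)) := by
    linear_combination -hr' - (conj α * conj ω) * hHQ - (conj α * P) * hωω
  have hprod : (1 - conj l * z) * S' ≠ 0 := by
    rw [hkey]
    exact neg_ne_zero.mpr (mul_ne_zero (mul_ne_zero (right_ne_zero_of_mul_eq_one hωω) hQ) hD)
  refine ⟨right_ne_zero_of_mul hprod, ?_⟩
  have hH₁' : H₁ * (l - z) * (1 - conj α * H) = (α - H) * (1 - conj l * z) := by
    rw [hH₁, mobius, mul_right_comm, div_mul_cancel₀ _ hD]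
  have hlz : l - z ≠ 0 := sub_ne_zero.mpr hzl.symm
  have hcancel : (H₁ * S' - conj ω * S) * ((1 - conj l * z) * (l - z) * (1 - conj α * H)) = 0 := by
    linear_combination ((1 - conj l * z) * S') * hH₁' + ((α - H) * (1 - conj l * z)) * hkey
      - (conj ω * (1 - conj l * z) * (1 - conj α * H)) * (hr - hHQ)
  exact sub_eq_zero.mp ((mul_eq_zero.mp hcancel).resolve_right
    (mul_ne_zero (mul_ne_zero (left_ne_zero_of_mul hprod) hlz) hD))

theorem not_forall_interpolates_conjReflect_ratio (k : ℕ) {p : ℂ[X]} (hp : p.natDegree ≤ k)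
    {ω : ℂ} (hω : ‖ω‖ = 1) {lam : Fin (k + 1) → ℂ} (hinj : Function.Injective lam)
    (hlam : ∀ j, lam j ∈ 𝔻) {h : ℂ → ℂ} {ρ : ℝ} (hρ : 1 < ρ)
    (hd : DifferentiableOn ℂ h (ball 0 ρ)) (hmaps : MapsTo h (ball 0 ρ) 𝔻) :
    ¬ ∀ j, (conjReflect k p).eval (lam j) ≠ 0 ∧
      h (lam j) * (conjReflect k p).eval (lam j) = ω * p.eval (lam j) := by
  induction k generalizing p ω h ρ with
  | zero =>
    intro hint
    obtain ⟨hQ, hHQ⟩ := hint 0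
    rw [eq_C_of_natDegree_le_zero hp] at hQ hHQ
    simp only [conjReflect_C, eval_C] at hQ hHQ
    have hH : ‖h (lam 0)‖ < 1 := mem_ball_zero_iff.mp (hmaps (ball_subset_ball hρ.le (hlam 0)))
    have := congrArg norm hHQ
    rw [norm_mul, norm_mul, hω, one_mul, Complex.norm_conj] at this
    have hc : 0 < ‖p.coeff 0‖ := by simpa using hQ
    nlinarith
  | succ k ih =>
    intro hint
    have hlamρ : ∀ j, lam j ∈ ball (0 : ℂ) ρ := fun j => ball_subset_ball hρ.le (hlam j)
    set l := lam 0
    set Q := conjReflect (k + 1) p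
    set r := C (h l) * Q - C ω * p
    have hroot : r.IsRoot l := by
      simp only [IsRoot, r, eval_sub, eval_mul, eval_C]
      exact sub_eq_zero.mpr (hint 0).2
    set s := r /ₘ (X - C l)
    have hrs : (X - C l) * s = r := mul_divByMonic_eq_iff_isRoot.mpr hroot
    have hr : r.natDegree ≤ k + 1 :=
      (natDegree_sub_le _ _).trans (max_le ((natDegree_C_mul_le _ _).trans
        (natDegree_conjReflect_le hp)) ((natDegree_C_mul_le _ _).trans hp))
    have hs : s.natDegree ≤ k := by
      rw [natDegree_divByMonic _ (monic_X_sub_C l), natDegree_X_sub_C]; omega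
    have hsharp :
        C (conj (h l)) * p - C (conj ω) * Q = (1 - C (conj l) * X) * conjReflect k s := by
      rw [← conjReflect_X_sub_C_mul _ hs, hrs, conjReflect_C_mul_sub_C_mul,
        conjReflect_conjReflect]
    obtain ⟨ρ', hρ', h₁, hd₁, hmaps₁, hquot⟩ := exists_schur_quotient hρ hd hmaps (hlam 0)
    refine ih hs (ω := conj ω) (by simpa using hω) (hinj.comp (Fin.succ_injective _))
      (fun j => hlam _) hρ' hd₁ hmaps₁ fun j => ?_
    obtain ⟨hQ, hHQ⟩ := hint j.succ
    have hr_eval := congrArg (eval (lam j.succ)) hrs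
    have hsharp_eval := congrArg (eval (lam j.succ)) hsharp
    simp only [eval_mul, eval_sub, eval_C, eval_X, eval_one, r] at hr_eval hsharp_eval
    exact schur_interpolation_step hω (hmaps (hlamρ 0)) (hmaps (hlamρ j.succ)) hQ
      (hinj.ne (Fin.succ_ne_zero j)) hHQ hr_eval.symm hsharp_eval (hquot _)

lemma blaschke_mul_eval_conjReflect {m : ℕ} (ω : ℂ) {a : Fin m → ℂ} (ha : ∀ j, a j ∈ 𝔻)
    {z : ℂ} (hz : z ∈ 𝔻) :
    (conjReflect m (∏ j, (X - C (a j)))).eval z ≠ 0 ∧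
      (ω * ∏ j, (a j - z) / (1 - conj (a j) * z)) *
          (conjReflect m (∏ j, (X - C (a j)))).eval z =
        (-1) ^ m * ω * (∏ j, (X - C (a j))).eval z := by
  have hden : ∀ j, 1 - conj (a j) * z ≠ 0 := fun j => one_sub_conj_mul_ne_zero (ha j) hz
  simp only [conjReflect_prod_X_sub_C, eval_prod, eval_sub, eval_one, eval_mul, eval_C, eval_X]
  refine ⟨Finset.prod_ne_zero_iff.mpr fun j _ => hden j, ?_⟩
  rw [Finset.prod_div_distrib, mul_assoc, div_mul_cancel₀ _ (Finset.prod_ne_zero_iff.mpr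
    fun j _ => hden j)]
  simp_rw [← neg_sub z, Finset.prod_neg, Finset.card_univ, Fintype.card_fin]
  ring

theorem stmt0_general {n : ℕ} (D : Set (Fin n → ℂ))
    (f : ℂ → Fin n → ℂ) (F : (Fin n → ℂ) → ℂ)
    (hf : DifferentiableOn ℂ f 𝔻) (hfD : ∀ z ∈ 𝔻, f z ∈ D)
    (hF : DifferentiableOn ℂ F D) (hFD : ∀ w ∈ D, F w ∈ 𝔻)
    (m : ℕ) (hB : IsBlaschke m (fun z => F (f z))) :
    IsMExtremal D (m + 1) f := by
  obtain ⟨ω, a, hω, ha, hFf⟩ := hB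
  refine ⟨hf, hfD, fun lam hinj hlam => ?_⟩
  rintro ⟨U, g, hUo, hUsub, hgd, hgD, hgf⟩
  obtain ⟨δ, hδ, hthick⟩ :=
    (isCompact_closedBall (0 : ℂ) 1).exists_thickening_subset_open hUo hUsub
  rw [thickening_closedBall hδ zero_le_one] at hthick
  refine not_forall_interpolates_conjReflect_ratio m (p := ∏ j, (X - C (a j)))
    ((natDegree_prod_le _ _).trans (by simp)) (ω := (-1) ^ m * ω) (by simp [hω]) hinj hlam
    (h := fun z => F (g z)) (by linarith : 1 < δ + 1)
    (hF.comp (hgd.mono hthick) fun z hz => hgD z (hthick hz))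
    (fun z hz => hFD _ (hgD z (hthick hz))) fun j => ?_
  simp only [hgf, hFf _ (hlam j)]
  exact blaschke_mul_eval_conjReflect ω ha (hlam j)

theorem stmt0 {n : ℕ} (D : Set (Fin n → ℂ)) (hDo : IsOpen D) (hDc : IsConnected D)
    (f : ℂ → Fin n → ℂ) (F : (Fin n → ℂ) → ℂ)
    (hf : DifferentiableOn ℂ f 𝔻) (hfD : ∀ z ∈ 𝔻, f z ∈ D)
    (hF : DifferentiableOn ℂ F D) (hFD : ∀ w ∈ D, F w ∈ 𝔻)
    (m : ℕ) (hm : 1 ≤ m) (hB : IsBlaschke m (fun z => F (f z))) :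
    IsMExtremal D (m + 1) f :=
  stmt0_general D f F hf hfD hF hFD m hB
end
end

section
/- A finite Blaschke product B of degree m is (m+1)-extremal in the unit disc: for any m+1 distinct points λ₁,…,λ_{m+1} ∈ 𝔻, there is no function g holomorphic on a neighborhood of the closed unit disc with g(𝔻) relatively compact in 𝔻 and g(λⱼ) = B(λⱼ) for all j = 1,…,m+1. -/
open Complex Metric Set

noncomputable section

variable {E : Type*} [NormedAddCommGroup E] [NormedSpace ℂ E]

/-
If `g` interpolated `B` at the `m + 1` points `λⱼ` with `|g| < 1` on the circle, the Pick matrices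
`[(1 - wᵢ conj wⱼ) / (1 - λᵢ conj λⱼ)]` of `g` and of `B` at these points would coincide.

The Pick matrix of `B` is singular: peeling off one Möbius factor at a time writes
`(1 - B z conj (B w)) / (1 - z conj w)` as a sum of `m` terms `u l z * conj (v l w)`, so the
matrix has rank at most `m`.

The Pick matrix of `g` is not: if `x` is in its kernel, put `F = ∑ xⱼ kⱼ` and
`G = ∑ xⱼ conj (g λⱼ) kⱼ`, where `kⱼ` is the Szegő kernel at `λⱼ`. The reproducing property of the
kernels in `H²` gives `‖F‖² - ‖G‖² = 2π x* P x = 0` and `‖G‖² = ⟨g G, F⟩ ≤ r ‖G‖ ‖F‖` with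
`r = max |g| < 1`, so `F = 0`, and `x = 0` because Szegő kernels at distinct points are linearly
independent.
-/

open ComplexConjugate Filter Matrix MeasureTheory Topology
open scoped Real

def szegoKernel (μ z : ℂ) : ℂ := (1 - conj μ * z)⁻¹

lemma one_sub_conj_mul_ne_zero_s1 {μ z : ℂ} (hμ : ‖μ‖ < 1) (hz : ‖z‖ ≤ 1) :
    1 - conj μ * z ≠ 0 := by
  have : ‖conj μ * z‖ < 1 := by
    rw [norm_mul, RCLike.norm_conj]
    exact mul_lt_one_of_nonneg_of_lt_one_left (norm_nonneg μ) hμ hz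
  intro h
  rw [← sub_eq_zero.1 h, norm_one] at this
  exact this.false

lemma differentiableOn_szegoKernel {μ : ℂ} (hμ : μ ∈ ball (0 : ℂ) 1) :
    DifferentiableOn ℂ (szegoKernel μ) (closedBall 0 1) := fun z hz => by
  have hne := one_sub_conj_mul_ne_zero_s1 (mem_ball_zero_iff.1 hμ) (mem_closedBall_zero_iff.1 hz)
  unfold szegoKernel
  fun_prop (disch := exact hne)

lemma DiffContOnCl.continuous_comp_circleMap {u : ℂ → ℂ} (hu : DiffContOnCl ℂ u (ball 0 1)) :
    Continuous fun θ => u (circleMap 0 1 θ) :=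
  hu.continuousOn_ball.comp_continuous (continuous_circleMap 0 1) fun θ => by simp

lemma conj_szegoKernel_circleMap (μ : ℂ) (θ : ℝ) :
    conj (szegoKernel μ (circleMap 0 1 θ)) = circleMap 0 1 θ * (circleMap 0 1 θ - μ)⁻¹ := by
  set z := circleMap 0 1 θ
  have hz : z * conj z = 1 := by simp [z, Complex.mul_conj, Complex.normSq_eq_norm_sq]
  have hz0 : z ≠ 0 := left_ne_zero_of_mul_eq_one hz
  rw [szegoKernel, map_inv₀, map_sub, map_one, map_mul, Complex.conj_conj,
    ← mul_inv_cancel_left₀ hz0 (1 - μ * conj z)⁻¹, ← mul_inv, mul_sub, mul_one, mul_left_comm, hz,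
    mul_one]

lemma diffContOnCl_szegoKernel {μ : ℂ} (hμ : μ ∈ ball (0 : ℂ) 1) :
    DiffContOnCl ℂ (szegoKernel μ) (ball 0 1) :=
  DifferentiableOn.diffContOnCl <|
    closure_ball (0 : ℂ) one_ne_zero ▸ differentiableOn_szegoKernel hμ

/-- `2π` times the `H²` inner product of the boundary values. -/
def hardyInner (u v : ℂ → ℂ) : ℂ :=
  ∫ θ in (0)..(2 * π), u (circleMap 0 1 θ) * conj (v (circleMap 0 1 θ))

def hardyNormSq (u : ℂ → ℂ) : ℝ := ∫ θ in (0)..(2 * π), ‖u (circleMap 0 1 θ)‖ ^ 2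

/-- On the circle `conj (szegoKernel μ z) = z / (z - μ)`, so this is Cauchy's integral formula. -/
theorem hardyInner_szegoKernel {u : ℂ → ℂ} (hu : DiffContOnCl ℂ u (ball 0 1)) {μ : ℂ}
    (hμ : μ ∈ ball (0 : ℂ) 1) : hardyInner u (szegoKernel μ) = 2 * π * u μ := by
  have cauchy := hu.circleIntegral_sub_inv_smul hμ
  simp only [circleIntegral, deriv_circleMap, smul_eq_mul] at cauchy
  calc hardyInner u (szegoKernel μ)
      = I⁻¹ * ∫ θ in (0)..(2 * π),
          circleMap 0 1 θ * I * ((circleMap 0 1 θ - μ)⁻¹ * u (circleMap 0 1 θ)) := by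
        rw [← intervalIntegral.integral_const_mul, hardyInner]
        congr 1 with θ
        rw [conj_szegoKernel_circleMap]
        field_simp
    _ = 2 * π * u μ := by
        rw [cauchy]
        field_simp

lemma hardyInner_self (u : ℂ → ℂ) : hardyInner u u = hardyNormSq u := by
  rw [hardyInner, hardyNormSq, ← intervalIntegral.integral_ofReal]
  congr 1 with θ
  rw [Complex.mul_conj, Complex.normSq_eq_norm_sq, Complex.ofReal_pow]

lemma hardyNormSq_nonneg (u : ℂ → ℂ) : 0 ≤ hardyNormSq u :=
  intervalIntegral.integral_nonneg (by positivity) fun _ _ => sq_nonneg _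

lemma hardyInner_eq_zero_of_hardyNormSq_eq_zero {u : ℂ → ℂ}
    (hu : Continuous fun θ => u (circleMap 0 1 θ)) (h : hardyNormSq u = 0) (v : ℂ → ℂ) :
    hardyInner u v = 0 := by
  have hae := (intervalIntegral.integral_eq_zero_iff_of_le_of_nonneg_ae (by positivity)
    (.of_forall fun θ => sq_nonneg _) ((hu.norm.pow 2).intervalIntegrable _ _)).1 h
  refine (intervalIntegral.integral_congr_ae ?_).trans intervalIntegral.integral_zero
  rw [uIoc_of_le (by positivity), ← ae_restrict_iff' measurableSet_Ioc]
  filter_upwards [hae] with θ hθ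
  simp_all

theorem eqOn_zero_of_hardyNormSq_eq_zero {u : ℂ → ℂ} (hu : DiffContOnCl ℂ u (ball 0 1))
    (h : hardyNormSq u = 0) : EqOn u 0 (ball 0 1) := fun μ hμ => by
  have := hardyInner_szegoKernel hu hμ
  rw [hardyInner_eq_zero_of_hardyNormSq_eq_zero hu.continuous_comp_circleMap h] at this
  simpa [Real.pi_ne_zero] using this.symm

theorem norm_hardyInner_mul_le {g u v : ℂ → ℂ} {r : ℝ}
    (hg : ∀ z ∈ sphere (0 : ℂ) 1, ‖g z‖ ≤ r) (hgc : Continuous fun θ => g (circleMap 0 1 θ))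
    (hu : Continuous fun θ => u (circleMap 0 1 θ))
    (hv : Continuous fun θ => v (circleMap 0 1 θ)) :
    ‖hardyInner (fun z => g z * u z) v‖ ≤ r / 2 * (hardyNormSq u + hardyNormSq v) := by
  have hsq : ∀ {w : ℂ → ℂ}, (Continuous fun θ => w (circleMap 0 1 θ)) →
      IntervalIntegrable (fun θ => ‖w (circleMap 0 1 θ)‖ ^ 2) volume 0 (2 * π) :=
    fun hw => (hw.norm.pow 2).intervalIntegrable _ _
  calc ‖hardyInner (fun z => g z * u z) v‖
      ≤ ∫ θ in (0)..(2 * π), ‖g (circleMap 0 1 θ) * u (circleMap 0 1 θ) *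
          conj (v (circleMap 0 1 θ))‖ :=
        intervalIntegral.norm_integral_le_integral_norm (by positivity)
    _ ≤ ∫ θ in (0)..(2 * π),
          r / 2 * (‖u (circleMap 0 1 θ)‖ ^ 2 + ‖v (circleMap 0 1 θ)‖ ^ 2) := by
        refine intervalIntegral.integral_mono_on (by positivity)
          (((hgc.mul hu).mul (Complex.continuous_conj.comp hv)).norm.intervalIntegrable _ _)
          (((hsq hu).add (hsq hv)).const_mul _) fun θ _ => ?_
        have hgθ := hg (circleMap 0 1 θ) (by simp)
        rw [norm_mul, norm_mul, RCLike.norm_conj]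
        nlinarith [mul_nonneg (norm_nonneg (g (circleMap 0 1 θ)))
            (sq_nonneg (‖u (circleMap 0 1 θ)‖ - ‖v (circleMap 0 1 θ)‖)),
          mul_nonneg (sub_nonneg.2 hgθ)
            (mul_nonneg (norm_nonneg (u (circleMap 0 1 θ)))
              (norm_nonneg (v (circleMap 0 1 θ))))]
    _ = r / 2 * (hardyNormSq u + hardyNormSq v) := by
        rw [intervalIntegral.integral_const_mul, intervalIntegral.integral_add (hsq hu) (hsq hv),
          hardyNormSq, hardyNormSq]

section PickMatrix

variable {ι : Type*} [Fintype ι]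

def szegoSum (lam x : ι → ℂ) (z : ℂ) : ℂ := ∑ j, x j * szegoKernel (lam j) z

lemma diffContOnCl_szegoSum {lam : ι → ℂ} (hlam : ∀ j, lam j ∈ ball (0 : ℂ) 1) (x : ι → ℂ) :
    DiffContOnCl ℂ (szegoSum lam x) (ball 0 1) := by
  refine DifferentiableOn.diffContOnCl ?_
  rw [closure_ball _ one_ne_zero]
  unfold szegoSum
  exact DifferentiableOn.fun_sum fun j _ =>
    (differentiableOn_szegoKernel (hlam j)).const_mul _

theorem hardyInner_szegoSum {u : ℂ → ℂ} (hu : DiffContOnCl ℂ u (ball 0 1)) {lam : ι → ℂ}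
    (hlam : ∀ j, lam j ∈ ball (0 : ℂ) 1) (x : ι → ℂ) :
    hardyInner u (szegoSum lam x) = 2 * π * ∑ j, conj (x j) * u (lam j) := by
  have hint : ∀ j, IntervalIntegrable (fun θ => conj (x j) *
      (u (circleMap 0 1 θ) * conj (szegoKernel (lam j) (circleMap 0 1 θ)))) volume 0 (2 * π) :=
    fun j => (continuous_const.mul (hu.continuous_comp_circleMap.mul
      (Complex.continuous_conj.comp (diffContOnCl_szegoKernel (hlam j)).continuous_comp_circleMap)))
      |>.intervalIntegrable _ _
  calc hardyInner u (szegoSum lam x)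
      = ∫ θ in (0)..(2 * π), ∑ j, conj (x j) *
          (u (circleMap 0 1 θ) * conj (szegoKernel (lam j) (circleMap 0 1 θ))) := by
        simp only [hardyInner, szegoSum, map_sum, map_mul, Finset.mul_sum]
        congr 1 with θ
        exact Finset.sum_congr rfl fun j _ => by ring
    _ = ∑ j, conj (x j) * hardyInner u (szegoKernel (lam j)) := by
        rw [intervalIntegral.integral_finsetSum fun j _ => hint j]
        simp only [intervalIntegral.integral_const_mul, hardyInner]
    _ = 2 * π * ∑ j, conj (x j) * u (lam j) := by
        simp only [hardyInner_szegoKernel hu (hlam _), Finset.mul_sum]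
        exact Finset.sum_congr rfl fun j _ => by ring

/-- Clearing denominators turns `szegoSum lam x` into a polynomial `q`, which vanishes identically;
its value at `1 / conj (lam j)` (at `0` if `lam j = 0`) is `x j` times a nonzero factor. -/
theorem eq_zero_of_szegoSum_eventuallyEq_zero [DecidableEq ι] {lam : ι → ℂ}
    (hinj : Function.Injective lam) {x : ι → ℂ} (h : szegoSum lam x =ᶠ[𝓝 0] 0) : x = 0 := by
  set q : ℂ → ℂ := fun z => ∑ j, x j * ∏ i ∈ Finset.univ.erase j, (1 - conj (lam i) * z)
  have hq : q =ᶠ[𝓝 0] 0 := by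
    have hden : ∀ᶠ z in 𝓝 (0 : ℂ), ∀ i, 1 - conj (lam i) * z ≠ 0 :=
      eventually_all.2 fun i => (by fun_prop : Continuous fun z => 1 - conj (lam i) * z)
        |>.continuousAt.eventually_ne (by simp)
    filter_upwards [h, hden] with z hz hden
    have : q z = szegoSum lam x z * ∏ i, (1 - conj (lam i) * z) := by
      simp only [q, szegoSum, szegoKernel, Finset.sum_mul]
      refine Finset.sum_congr rfl fun j _ => ?_
      rw [← Finset.mul_prod_erase _ _ (Finset.mem_univ j), mul_assoc,
        inv_mul_cancel_left₀ (hden j)]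
    rw [this, hz, Pi.zero_apply, zero_mul]
  have hq0 : ∀ z, q z = 0 := fun z =>
    (analyticOnNhd_univ_iff_differentiable.2 (by fun_prop : Differentiable ℂ q)
      |>.eqOn_zero_of_preconnected_of_eventuallyEq_zero isPreconnected_univ (mem_univ 0) hq)
      (mem_univ z)
  have hx_of_ne : ∀ j, lam j ≠ 0 → x j = 0 := fun j hj => by
    have hcj : conj (lam j) ≠ 0 := (map_ne_zero _).2 hj
    have := hq0 (conj (lam j))⁻¹
    simp only [q] at this
    rw [Finset.sum_eq_single j (fun i _ hij => mul_eq_zero_of_right _ (Finset.prod_eq_zero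
      (Finset.mem_erase.2 ⟨hij.symm, Finset.mem_univ j⟩) (by rw [mul_inv_cancel₀ hcj, sub_self])))
      (by simp)] at this
    refine (mul_eq_zero.1 this).resolve_right (Finset.prod_ne_zero_iff.2 fun i hi => ?_)
    rw [sub_ne_zero, ne_comm, ← div_eq_mul_inv, ne_eq, div_eq_one_iff_eq hcj,
      (starRingEnd ℂ).injective.eq_iff]
    exact hinj.ne (Finset.ne_of_mem_erase hi)
  funext j
  by_cases hj : lam j = 0
  · have := hq0 0
    simp only [q, mul_zero, sub_zero, Finset.prod_const_one, mul_one] at this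
    rwa [Finset.sum_eq_single j (fun i _ hij => hx_of_ne i fun hi => hij (hinj (hi.trans hj.symm)))
      (by simp)] at this
  · exact hx_of_ne j hj

def pickMatrix (lam w : ι → ℂ) : Matrix ι ι ℂ :=
  Matrix.of fun i j => (1 - w i * conj (w j)) / (1 - lam i * conj (lam j))

lemma pickMatrix_mulVec (lam w x : ι → ℂ) (i : ι) :
    (pickMatrix lam w *ᵥ x) i =
      szegoSum lam x (lam i) - w i * szegoSum lam (fun j => x j * conj (w j)) (lam i) := by
  simp only [mulVec, dotProduct, pickMatrix, of_apply, szegoSum, szegoKernel, Finset.mul_sum,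
    ← Finset.sum_sub_distrib]
  exact Finset.sum_congr rfl fun j _ => by rw [mul_comm (conj (lam j))]; ring

theorem hardyNormSq_sub_hardyNormSq_eq_pickForm {lam : ι → ℂ}
    (hlam : ∀ j, lam j ∈ ball (0 : ℂ) 1) (w x : ι → ℂ) :
    (hardyNormSq (szegoSum lam x) : ℂ) - hardyNormSq (szegoSum lam fun j => x j * conj (w j)) =
      2 * π * (star x ⬝ᵥ (pickMatrix lam w *ᵥ x)) := by
  rw [← hardyInner_self, ← hardyInner_self,
    hardyInner_szegoSum (diffContOnCl_szegoSum hlam x) hlam,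
    hardyInner_szegoSum (diffContOnCl_szegoSum hlam _) hlam, ← mul_sub, ← Finset.sum_sub_distrib]
  simp only [dotProduct, pickMatrix_mulVec, Pi.star_apply, Complex.star_def, map_mul,
    Complex.conj_conj, mul_sub]
  congr 1
  exact Finset.sum_congr rfl fun j _ => by ring

theorem hardyInner_mul_szegoSum {g : ℂ → ℂ} (hg : DiffContOnCl ℂ g (ball 0 1))
    {lam : ι → ℂ} (hlam : ∀ j, lam j ∈ ball (0 : ℂ) 1) (x : ι → ℂ) :
    hardyInner (fun z => g z * szegoSum lam (fun j => x j * conj (g (lam j))) z)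
        (szegoSum lam x) =
      hardyNormSq (szegoSum lam fun j => x j * conj (g (lam j))) := by
  have hG := diffContOnCl_szegoSum hlam fun j => x j * conj (g (lam j))
  have hgG : DiffContOnCl ℂ (fun z => g z * szegoSum lam (fun j => x j * conj (g (lam j))) z)
      (ball 0 1) := hg.smul hG
  rw [← hardyInner_self, hardyInner_szegoSum hgG hlam, hardyInner_szegoSum hG hlam]
  simp only [map_mul, Complex.conj_conj]
  congr 1
  exact Finset.sum_congr rfl fun j _ => by ring

theorem eq_zero_of_pickForm_eq_zero [DecidableEq ι] {g : ℂ → ℂ}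
    (hg : DiffContOnCl ℂ g (ball 0 1)) (hg1 : ∀ z ∈ sphere (0 : ℂ) 1, ‖g z‖ < 1)
    {lam : ι → ℂ} (hinj : Function.Injective lam) (hlam : ∀ j, lam j ∈ ball (0 : ℂ) 1)
    {x : ι → ℂ} (hx : star x ⬝ᵥ (pickMatrix lam (g ∘ lam) *ᵥ x) = 0) : x = 0 := by
  obtain ⟨z₀, hz₀, hmax⟩ := (isCompact_sphere (0 : ℂ) 1).exists_isMaxOn
    (NormedSpace.sphere_nonempty.2 zero_le_one)
    (hg.continuousOn_ball.mono sphere_subset_closedBall).norm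
  set F := szegoSum lam x
  set G := szegoSum lam fun j => x j * conj (g (lam j))
  have hF := diffContOnCl_szegoSum hlam x
  have hG := diffContOnCl_szegoSum hlam fun j => x j * conj (g (lam j))
  have hGF : hardyNormSq G = hardyNormSq F := by
    have := hardyNormSq_sub_hardyNormSq_eq_pickForm hlam (g ∘ lam) x
    rw [hx, mul_zero, sub_eq_zero] at this
    exact_mod_cast this.symm
  have hbound := norm_hardyInner_mul_le (fun z hz => hmax hz) hg.continuous_comp_circleMap
    hG.continuous_comp_circleMap hF.continuous_comp_circleMap
  rw [hardyInner_mul_szegoSum hg hlam, Complex.norm_real,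
    Real.norm_of_nonneg (hardyNormSq_nonneg _), hGF] at hbound
  have hF0 : hardyNormSq F = 0 := by
    nlinarith [hardyNormSq_nonneg F, hg1 z₀ hz₀]
  exact eq_zero_of_szegoSum_eventuallyEq_zero hinj <|
    eventuallyEq_of_mem (ball_mem_nhds 0 one_pos) (eqOn_zero_of_hardyNormSq_eq_zero hF hF0)

theorem det_pickMatrix_ne_zero [DecidableEq ι] {g : ℂ → ℂ}
    (hg : DiffContOnCl ℂ g (ball 0 1)) (hg1 : ∀ z ∈ sphere (0 : ℂ) 1, ‖g z‖ < 1)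
    {lam : ι → ℂ} (hinj : Function.Injective lam) (hlam : ∀ j, lam j ∈ ball (0 : ℂ) 1) :
    (pickMatrix lam (g ∘ lam)).det ≠ 0 := fun hdet => by
  obtain ⟨x, hx0, hx⟩ := exists_mulVec_eq_zero_iff.2 hdet
  exact hx0 (eq_zero_of_pickForm_eq_zero hg hg1 hinj hlam (by rw [hx, dotProduct_zero]))

def blaschkeFactor (a z : ℂ) : ℂ := (a - z) / (1 - conj a * z)

lemma one_sub_blaschkeFactor_mul_conj_div {a z w : ℂ} (ha : a ∈ ball (0 : ℂ) 1)
    (hz : z ∈ ball (0 : ℂ) 1) (hw : w ∈ ball (0 : ℂ) 1) :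
    (1 - blaschkeFactor a z * conj (blaschkeFactor a w)) / (1 - z * conj w) =
      (1 - a * conj a) * szegoKernel a z * conj (szegoKernel a w) := by
  rw [mem_ball_zero_iff] at ha hz hw
  have hza : 1 - z * conj a ≠ 0 := by simpa [mul_comm] using one_sub_conj_mul_ne_zero_s1 ha hz.le
  have hwa : 1 - a * conj w ≠ 0 := by
    simpa [mul_comm] using (map_ne_zero (starRingEnd ℂ)).2 (one_sub_conj_mul_ne_zero_s1 ha hw.le)
  have hzw : 1 - z * conj w ≠ 0 := by
    simpa [mul_comm] using one_sub_conj_mul_ne_zero_s1 hw hz.le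
  simp only [blaschkeFactor, szegoKernel, map_div₀, map_sub, map_inv₀, map_one, map_mul,
    Complex.conj_conj]
  field_simp
  ring

theorem exists_blaschke_pickKernel_eq_sum :
    ∀ {m : ℕ} (a : Fin m → ℂ), (∀ j, a j ∈ ball (0 : ℂ) 1) →
      ∃ u v : Fin m → ℂ → ℂ, ∀ z ∈ ball (0 : ℂ) 1, ∀ w ∈ ball (0 : ℂ) 1,
        (1 - (∏ j, blaschkeFactor (a j) z) * conj (∏ j, blaschkeFactor (a j) w)) /
          (1 - z * conj w) = ∑ l, u l z * conj (v l w)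
  | 0, _, _ => ⟨0, 0, fun z _ w _ => by simp⟩
  | m + 1, a, ha => by
    obtain ⟨u, v, huv⟩ := exists_blaschke_pickKernel_eq_sum (fun j => a j.succ) fun j => ha _
    set b := blaschkeFactor (a 0)
    refine ⟨Fin.cons (fun z => (1 - a 0 * conj (a 0)) * szegoKernel (a 0) z)
        fun l z => b z * u l z, Fin.cons (szegoKernel (a 0)) fun l w => b w * v l w,
      fun z hz w hw => ?_⟩
    have hsplit : ∀ p q r s d : ℂ, (1 - p * q * conj (r * s)) / d =
        (1 - p * conj r) / d + p * conj r * ((1 - q * conj s) / d) := by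
      intros; rw [map_mul]; ring
    rw [Fin.prod_univ_succ, Fin.prod_univ_succ, hsplit,
      one_sub_blaschkeFactor_mul_conj_div (ha 0) hz hw, huv z hz w hw, Fin.sum_univ_succ,
      Finset.mul_sum]
    simp only [Fin.cons_zero, Fin.cons_succ, map_mul]
    congr 1
    exact Finset.sum_congr rfl fun l _ => by ring

theorem IsBlaschke.det_pickMatrix_eq_zero [DecidableEq ι] {m : ℕ} {B : ℂ → ℂ}
    (hB : IsBlaschke m B) {lam : ι → ℂ} (hlam : ∀ j, lam j ∈ 𝔻) (hcard : m < Fintype.card ι) :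
    (pickMatrix lam (B ∘ lam)).det = 0 := by
  obtain ⟨ω, a, hω, ha, hBa⟩ := hB
  obtain ⟨u, v, huv⟩ := exists_blaschke_pickKernel_eq_sum a ha
  have hωω : ω * conj ω = 1 := by
    rw [Complex.mul_conj, Complex.normSq_eq_norm_sq, hω, one_pow, Complex.ofReal_one]
  set X : Matrix ι (Fin m) ℂ := of fun i l => u l (lam i)
  set Y : Matrix (Fin m) ι ℂ := of fun l j => conj (v l (lam j))
  have hfactor : pickMatrix lam (B ∘ lam) = X * Y := by
    ext i j
    rw [pickMatrix, of_apply, mul_apply, Function.comp_apply, Function.comp_apply,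
      hBa _ (hlam i), hBa _ (hlam j), map_mul, mul_mul_mul_comm, hωω, one_mul]
    exact huv _ (hlam i) _ (hlam j)
  by_contra hdet
  have hrank := rank_of_isUnit _ (isUnit_iff_isUnit_det _ |>.2 (Ne.isUnit hdet))
  have := (rank_mul_le_left X Y).trans (rank_le_card_width X)
  rw [← hfactor, hrank, Fintype.card_fin] at this
  omega

end PickMatrix

theorem stmt1 (m : ℕ) (B : ℂ → ℂ) (hB : IsBlaschke m B)
    (lam : Fin (m + 1) → ℂ) (hinj : Function.Injective lam) (hmem : ∀ j, lam j ∈ 𝔻) :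
    ¬ ∃ (U : Set ℂ) (g : ℂ → ℂ), IsOpen U ∧ Metric.closedBall (0 : ℂ) 1 ⊆ U ∧
        DifferentiableOn ℂ g U ∧ (∀ z ∈ U, g z ∈ 𝔻) ∧
        closure (g '' 𝔻) ⊆ 𝔻 ∧ ∀ j, g (lam j) = B (lam j) := by
  rintro ⟨U, g, -, hU, hgU, hgD, -, hgB⟩
  have hg : DiffContOnCl ℂ g (ball 0 1) :=
    (hgU.mono (closure_ball (0 : ℂ) one_ne_zero ▸ hU)).diffContOnCl
  have hg1 : ∀ z ∈ sphere (0 : ℂ) 1, ‖g z‖ < 1 := fun z hz =>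
    mem_ball_zero_iff.1 (hgD z (hU (sphere_subset_closedBall hz)))
  apply det_pickMatrix_ne_zero hg hg1 hinj hmem
  rw [show g ∘ lam = B ∘ lam from funext hgB]
  exact hB.det_pickMatrix_eq_zero hmem (by simp)

end
end

section
/- Let a₁ ∈ [0,1] and define f : 𝔻 → 𝔹_n (n ≥ 2) by f(λ) = (a₁λ, √(1−a₁²)λ², 0, …, 0). Then the function F(z) = z₁²/(2−a₁²) + (2√(1−a₁²)/(2−a₁²))·z₂ maps 𝔹_n holomorphically into 𝔻 and satisfies F(f(λ)) = λ² for all λ ∈ 𝔻; hence f is a 3-complex geodesic. -/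
open Complex Metric Set

noncomputable section

variable {E : Type*} [NormedAddCommGroup E] [NormedSpace ℂ E]

/-- The disc `λ ↦ (a₁λ, √(1-a₁²)λ², 0, …, 0)` in `ℂⁿ`, `n ≥ 2`. -/
def f8 (n : ℕ) (hn : 2 ≤ n) (a₁ : ℝ) : ℂ → EuclideanSpace ℂ (Fin n) := fun z =>
  EuclideanSpace.single (⟨0, by omega⟩ : Fin n) ((a₁ : ℂ) * z) +
    EuclideanSpace.single (⟨1, by omega⟩ : Fin n) (((Real.sqrt (1 - a₁ ^ 2) : ℝ) : ℂ) * z ^ 2)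

/-- The left functional `F(z) = z₁²/(2-a₁²) + 2√(1-a₁²)z₂/(2-a₁²)`. -/
def F8 (n : ℕ) (hn : 2 ≤ n) (a₁ : ℝ) : EuclideanSpace ℂ (Fin n) → ℂ := fun z =>
  z (⟨0, by omega⟩ : Fin n) ^ 2 / (2 - (a₁ : ℂ) ^ 2) +
    2 * ((Real.sqrt (1 - a₁ ^ 2) : ℝ) : ℂ) / (2 - (a₁ : ℂ) ^ 2) * z (⟨1, by omega⟩ : Fin n)

/-!
Write `s = √(1 - a₁²)`, so that the denominator of `F8` is `2 - a₁² = 1 + s²`. On the unit ball,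
`|z₁² + 2s z₂| ≤ |z₁|² + 2s|z₂| ≤ |z₁|² + |z₂|² + s² < 1 + s²` by AM–GM, so `|F8 z| < 1`. Along the
disc, `F8 (f8 λ) = (a₁² + 2s²) λ² / (2 - a₁²) = λ²`, a Blaschke product of degree 2.
-/

theorem norm_sq_add_two_mul_lt_one_add_sq {z w : ℂ} {s : ℝ} (hs : 0 ≤ s)
    (h : ‖z‖ ^ 2 + ‖w‖ ^ 2 < 1) : ‖z ^ 2 + 2 * s * w‖ < 1 + s ^ 2 :=
  calc ‖z ^ 2 + 2 * s * w‖ ≤ ‖z‖ ^ 2 + 2 * s * ‖w‖ := (norm_add_le _ _).trans_eq <| by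
        rw [norm_pow, norm_mul, norm_mul, Complex.norm_real, Real.norm_of_nonneg hs]; norm_num
    _ ≤ ‖z‖ ^ 2 + ‖w‖ ^ 2 + s ^ 2 := by nlinarith [sq_nonneg (s - ‖w‖)]
    _ < 1 + s ^ 2 := by linarith

namespace EuclideanSpace

variable {𝕜 ι : Type*} [RCLike 𝕜] [Fintype ι]

theorem norm_sq_add_norm_sq_le (x : EuclideanSpace 𝕜 ι) {i j : ι} (hij : i ≠ j) :
    ‖x i‖ ^ 2 + ‖x j‖ ^ 2 ≤ ‖x‖ ^ 2 := by
  classical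
  have := Finset.sum_le_sum_of_subset_of_nonneg (Finset.subset_univ {i, j})
    fun k _ _ ↦ sq_nonneg ‖x k‖
  rwa [Finset.sum_pair hij, ← norm_sq_eq] at this

theorem norm_single_add_single_sq [DecidableEq ι] {i j : ι} (hij : i ≠ j) (a b : 𝕜) :
    ‖single i a + single j b‖ ^ 2 = ‖a‖ ^ 2 + ‖b‖ ^ 2 := by
  simp only [sq]
  rw [norm_add_sq_eq_norm_sq_add_norm_sq_of_inner_eq_zero (𝕜 := 𝕜) _ _
    (by simp [inner_single_left, hij]), PiLp.norm_single, PiLp.norm_single]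

end EuclideanSpace

theorem isBlaschke_two_sq : IsBlaschke 2 (· ^ 2) :=
  ⟨1, 0, norm_one, fun _ ↦ by simp [𝔻], fun z _ ↦ by simp [sq]⟩

section

variable {n : ℕ} (hn : 2 ≤ n) (a₁ : ℝ)

theorem differentiable_f8 : Differentiable ℂ (f8 n hn a₁) := by
  refine (differentiable_piLp 2).2 fun i ↦ ?_
  simp only [f8, PiLp.add_apply, PiLp.single_apply]
  split_ifs <;> fun_prop

theorem differentiable_F8 : Differentiable ℂ (F8 n hn a₁) := by
  unfold F8
  fun_prop

theorem mapsTo_f8 (ha : a₁ ^ 2 ≤ 1) : MapsTo (f8 n hn a₁) 𝔻 (ball 0 1) := by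
  intro z hz
  have hz : ‖z‖ ^ 2 < 1 := by simpa [𝔻] using hz
  rw [mem_ball_zero_iff, ← sq_lt_one_iff₀ (norm_nonneg _), f8,
    EuclideanSpace.norm_single_add_single_sq (by simp)]
  simp only [norm_mul, norm_pow, Complex.norm_real, Real.norm_eq_abs, mul_pow, sq_abs,
    Real.sq_sqrt (sub_nonneg.2 ha)]
  nlinarith [mul_nonneg (sub_nonneg.2 ha) (by nlinarith : 0 ≤ ‖z‖ ^ 2 - (‖z‖ ^ 2) ^ 2)]

theorem mapsTo_F8 (ha : a₁ ^ 2 ≤ 1) : MapsTo (F8 n hn a₁) (ball 0 1) 𝔻 := by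
  intro z hz
  set s := √(1 - a₁ ^ 2)
  have hden : (2 : ℂ) - a₁ ^ 2 = ((1 + s ^ 2 : ℝ) : ℂ) := by
    rw [Real.sq_sqrt (sub_nonneg.2 ha)]; push_cast; ring
  have hcoord := EuclideanSpace.norm_sq_add_norm_sq_le z (i := ⟨0, by omega⟩) (j := ⟨1, by omega⟩)
    (by simp)
  have hz : ‖z‖ ^ 2 < 1 := by
    rw [sq_lt_one_iff₀ (norm_nonneg _)]; simpa using hz
  have key := norm_sq_add_two_mul_lt_one_add_sq (Real.sqrt_nonneg (1 - a₁ ^ 2)) (hcoord.trans_lt hz)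
  have hF : F8 n hn a₁ z =
      (z ⟨0, by omega⟩ ^ 2 + 2 * s * z ⟨1, by omega⟩) / ((1 + s ^ 2 : ℝ) : ℂ) := by
    rw [F8, hden]; ring
  rw [𝔻, mem_ball_zero_iff, hF, norm_div, Complex.norm_real, Real.norm_of_nonneg (by positivity)]
  exact (div_lt_one (by positivity)).2 key

theorem F8_f8 (ha : a₁ ^ 2 ≤ 1) (z : ℂ) : F8 n hn a₁ (f8 n hn a₁ z) = z ^ 2 := by
  have hs : ((√(1 - a₁ ^ 2) : ℝ) : ℂ) ^ 2 = 1 - a₁ ^ 2 := by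
    exact_mod_cast Real.sq_sqrt (sub_nonneg.2 ha)
  have hden : (2 : ℂ) - a₁ ^ 2 ≠ 0 := by
    exact_mod_cast (by nlinarith : (2 : ℝ) - a₁ ^ 2 ≠ 0)
  simp only [F8, f8, PiLp.add_apply, PiLp.single_eq_same, ne_eq, Fin.mk.injEq, zero_ne_one,
    not_false_eq_true, PiLp.single_eq_of_ne, add_zero, one_ne_zero, zero_add]
  field_simp
  linear_combination (2 * z ^ 2) * hs

end

theorem stmt8 {n : ℕ} (hn : 2 ≤ n) (a₁ : ℝ) (ha : a₁ ∈ Set.Icc (0 : ℝ) 1) :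
    Differentiable ℂ (F8 n hn a₁) ∧
    (∀ z ∈ Metric.ball (0 : EuclideanSpace ℂ (Fin n)) 1, F8 n hn a₁ z ∈ 𝔻) ∧
    (∀ z ∈ 𝔻, F8 n hn a₁ (f8 n hn a₁ z) = z ^ 2) ∧
    IsComplexGeodesicOfOrder (Metric.ball (0 : EuclideanSpace ℂ (Fin n)) 1) 3 (f8 n hn a₁) := by
  have ha' : a₁ ^ 2 ≤ 1 := by nlinarith [ha.1, ha.2]
  have hF := differentiable_F8 hn a₁
  have hcomp : ∀ z ∈ 𝔻, F8 n hn a₁ (f8 n hn a₁ z) = z ^ 2 := fun z _ ↦ F8_f8 hn a₁ ha' z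
  exact ⟨hF, mapsTo_F8 hn a₁ ha', hcomp, (differentiable_f8 hn a₁).differentiableOn,
    mapsTo_f8 hn a₁ ha', F8 n hn a₁, hF.differentiableOn, mapsTo_F8 hn a₁ ha', 2, by norm_num,
    by norm_num, _, isBlaschke_two_sq, hcomp⟩

end
end

section
/- Let a₁ ∈ (0,1) and γ ∈ 𝔻. Then the system |α|a₁ = |γ|, |β|√(1−a₁²) = 1−|γ|², |α|² + |β|² ≤ 1 has no solution α, β ∈ ℂ. Equivalently, the inequality |γ|²/a₁² + (1−|γ|²)²/(1−a₁²) ≤ 1 fails for all γ ∈ 𝔻, a₁ ∈ (0,1). -/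
open Complex Metric Set

noncomputable section

variable {E : Type*} [NormedAddCommGroup E] [NormedSpace ℂ E]

theorem stmt11 (a₁ : ℝ) (ha : a₁ ∈ Set.Ioo (0 : ℝ) 1) (γ : ℂ) (hγ : γ ∈ 𝔻) :
    (¬ ∃ α β : ℂ, ‖α‖ * a₁ = ‖γ‖ ∧ ‖β‖ * Real.sqrt (1 - a₁ ^ 2) = 1 - ‖γ‖ ^ 2 ∧
        ‖α‖ ^ 2 + ‖β‖ ^ 2 ≤ 1) ∧
    ¬ (‖γ‖ ^ 2 / a₁ ^ 2 + (1 - ‖γ‖ ^ 2) ^ 2 / (1 - a₁ ^ 2) ≤ 1) := by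
  obtain ⟨ha0, ha1⟩ := ha
  have hg0 : (0:ℝ) ≤ ‖γ‖ := norm_nonneg γ
  have hg1 : ‖γ‖ < 1 := by simpa [𝔻] using hγ
  set g := ‖γ‖ with hgdef
  have ha2 : (0:ℝ) < a₁ ^ 2 := by positivity
  have ha2' : (0:ℝ) < 1 - a₁ ^ 2 := by nlinarith
  have key : ¬ (g ^ 2 / a₁ ^ 2 + (1 - g ^ 2) ^ 2 / (1 - a₁ ^ 2) ≤ 1) := by
    rw [not_le, div_add_div _ _ (ne_of_gt ha2) (ne_of_gt ha2'),
      lt_div_iff₀ (by positivity)]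
    nlinarith [sq_nonneg (a₁ ^ 2 - g ^ 2), mul_pos (mul_pos ha2 ha2) ha2',
      sq_nonneg g, mul_nonneg (mul_nonneg (sq_nonneg g) (by nlinarith : (0:ℝ) ≤ 1 - g ^ 2)) ha2'.le]
  refine ⟨?_, key⟩
  rintro ⟨α, β, h1, h2, h3⟩
  have hα : ‖α‖ ^ 2 = g ^ 2 / a₁ ^ 2 := by
    rw [eq_div_iff ha2.ne']
    nlinarith [h1]
  have hβ : ‖β‖ ^ 2 = (1 - g ^ 2) ^ 2 / (1 - a₁ ^ 2) := by
    have hs : Real.sqrt (1 - a₁ ^ 2) ^ 2 = 1 - a₁ ^ 2 := Real.sq_sqrt ha2'.le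
    rw [eq_div_iff ha2'.ne']
    nlinarith [h2, hs]
  exact key (by rw [← hα, ← hβ]; exact h3)

end
end

section
/- The map π : ℂ^{2×2} → ℂ³, z ↦ (z₁₁, z₂₂, det z), restricted to the Cartan domain ℛ_{II} of symmetric 2×2 matrices with operator norm less than 1, is a proper holomorphic map onto the tetrablock 𝔼 = {x ∈ ℂ³ : |x₁ − x̄₂x₃| + |x₂ − x̄₁x₃| + |x₃|² < 1}, and its locus (branching) set equals the royal variety 𝒯 = {(x₁, x₂, x₃) ∈ 𝔻³ : x₁x₂ = x₃}. -/
open Complex Metric Set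

noncomputable section

variable {E : Type*} [NormedAddCommGroup E] [NormedSpace ℂ E]

attribute [local instance] Matrix.normedAddCommGroup Matrix.normedSpace

/-- The Cartan domain of the second type: symmetric `2 × 2` complex matrices of
operator norm less than `1`. -/
def RII : Set (Matrix (Fin 2) (Fin 2) ℂ) :=
  {z | z.IsSymm ∧ ‖Matrix.toEuclideanCLM (𝕜 := ℂ) z‖ < 1}

/-- The map `π : z ↦ (z₁₁, z₂₂, det z)`. -/
def tetraPi (z : Matrix (Fin 2) (Fin 2) ℂ) : Fin 3 → ℂ := ![z 0 0, z 1 1, z.det]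

/-- The tetrablock. -/
def TetE : Set (Fin 3 → ℂ) :=
  {x | ‖x 0 - (starRingEnd ℂ) (x 1) * x 2‖ + ‖x 1 - (starRingEnd ℂ) (x 0) * x 2‖ + ‖x 2‖ ^ 2 < 1}

/-- The royal variety of the tetrablock. -/
def RoyalT : Set (Fin 3 → ℂ) := {x | x 0 ∈ 𝔻 ∧ x 1 ∈ 𝔻 ∧ x 2 ∈ 𝔻 ∧ x 0 * x 1 = x 2}

/-!
For a symmetric `z = !![a, b; b, c]`, `‖z‖ < 1` exactly when the Hermitian matrix `1 - zᴴ * z` is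
positive definite, i.e. when its trace and its determinant
`Δ = 1 - |a|² - 2|b|² - |c|² + |ac - b²|²` are positive. Let `A`, `C` be the diagonal entries of
`1 - zᴴ * z` and `d = ac - b²`. Then `|c - ā d|² = A² - (A + |b|²) Δ`, similarly with `a, A` and
`c, C` exchanged, and `A + C - Δ = 1 - |d|²`. As `|c - ā d|² - (A - Δ/2)² = -Δ (|b|² + Δ/4)`,
comparing `|c - ā d|` with `A - Δ/2` and `|a - c̄ d|` with `C - Δ/2` shows that the same positivity
characterises `π z = (a, c, d) ∈ 𝔼` (when `Δ ≤ 0` one uses `-Δ ≤ 4|b|²`, valid since `|a|, |c| < 1`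
on `𝔼`). So `ℛ_II` consists of the symmetric matrices that `π` maps into `𝔼`, the fibre of `π` over
`x ∈ 𝔼` is `{!![x₀, b; b, x₁] | b² = x₀ x₁ - x₂}`, properness follows because `ℛ_II` is bounded, and
the fibre is a single point exactly when `x₀ x₁ = x₂`.
-/

open ComplexConjugate

namespace ContinuousLinearMap

variable {𝕜 E F : Type*} [RCLike 𝕜] [NormedAddCommGroup E] [NormedSpace 𝕜 E]
  [FiniteDimensional 𝕜 E] [NormedAddCommGroup F] [NormedSpace 𝕜 F]

lemma exists_norm_eq_one_norm_apply_eq_opNorm [Nontrivial E] (f : E →L[𝕜] F) :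
    ∃ x, ‖x‖ = 1 ∧ ‖f x‖ = ‖f‖ := by
  have := FiniteDimensional.proper_rclike 𝕜 E
  have hK : IsCompact ((fun x => ‖f x‖) '' sphere (0 : E) 1) :=
    (isCompact_sphere 0 1).image (by fun_prop)
  obtain ⟨x, hx, hfx⟩ := hK.sSup_mem
    ((Set.nonempty_coe_sort.1 (NormedSpace.sphere_nonempty_rclike 𝕜 zero_le_one)).image _)
  exact ⟨x, mem_sphere_zero_iff_norm.1 hx, hfx.trans (sSup_sphere_eq_norm f)⟩

lemma opNorm_lt_one_iff (f : E →L[𝕜] F) : ‖f‖ < 1 ↔ ∀ x ≠ 0, ‖f x‖ < ‖x‖ := by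
  refine ⟨fun hf x hx => ?_, fun h => ?_⟩
  · calc ‖f x‖ ≤ ‖f‖ * ‖x‖ := f.le_opNorm x
      _ < 1 * ‖x‖ := by gcongr
      _ = ‖x‖ := one_mul _
  · cases subsingleton_or_nontrivial E with
    | inl _ => simp [opNorm_subsingleton]
    | inr _ =>
      obtain ⟨x, hx, hfx⟩ := f.exists_norm_eq_one_norm_apply_eq_opNorm
      simpa [← hfx, hx] using h x (norm_ne_zero_iff.1 (by simp [hx]))

end ContinuousLinearMap

lemma lt_sub_half_of_sq_eq {q A s Δ : ℝ} (hq : 0 ≤ q) (hs : 0 ≤ s) (hA : 0 < A) (hΔ : 0 < Δ)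
    (h : q ^ 2 = A ^ 2 - (A + s) * Δ) : q < A - Δ / 2 := by
  have hΔA : Δ ≤ A := by nlinarith [sq_nonneg q, mul_nonneg hs hΔ.le]
  have hsq : q ^ 2 < (A - Δ / 2) ^ 2 := by nlinarith [mul_nonneg hs hΔ.le]
  exact (pow_lt_pow_iff_left₀ hq (by linarith) two_ne_zero).1 hsq

lemma sub_half_le_of_sq_eq {q A s Δ : ℝ} (hq : 0 ≤ q) (hΔ : Δ ≤ 0) (hs : -Δ ≤ 4 * s)
    (h : q ^ 2 = A ^ 2 - (A + s) * Δ) : A - Δ / 2 ≤ q :=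
  (abs_le_of_sq_le_sq' (by nlinarith) hq).2

lemma mul_hermitianForm_eq (A C : ℝ) (W x y : ℂ) :
    A * (A * ‖x‖ ^ 2 + C * ‖y‖ ^ 2 - 2 * (W * x * conj y).re)
      = ‖A * x - conj W * y‖ ^ 2 + (A * C - ‖W‖ ^ 2) * ‖y‖ ^ 2 := by
  simp only [Complex.sq_norm, Complex.normSq_apply, Complex.mul_re, Complex.mul_im,
    Complex.sub_re, Complex.sub_im, Complex.conj_re, Complex.conj_im, Complex.ofReal_re,
    Complex.ofReal_im]
  ring

lemma hermitianForm_pos_iff (A C : ℝ) (W : ℂ) :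
    (∀ x y : ℂ, x ≠ 0 ∨ y ≠ 0 → 0 < A * ‖x‖ ^ 2 + C * ‖y‖ ^ 2 - 2 * (W * x * conj y).re) ↔
      0 < A + C ∧ 0 < A * C - ‖W‖ ^ 2 := by
  constructor
  · intro h
    have hA : 0 < A := by simpa using h 1 0 (by simp)
    have hC : 0 < C := by simpa using h 0 1 (by simp)
    have hQ := h (conj W) A (by simp [hA.ne'])
    have key := mul_hermitianForm_eq A C W (conj W) A
    rw [mul_comm (A : ℂ), sub_self, norm_zero] at key
    refine ⟨by linarith, pos_of_mul_pos_left ?_ (sq_nonneg ‖(A : ℂ)‖)⟩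
    linarith [mul_pos hA hQ]
  · rintro ⟨hAC, hdet⟩ x y hxy
    have hA : 0 < A := by nlinarith [sq_nonneg ‖W‖]
    refine pos_of_mul_pos_right ?_ hA.le
    rw [mul_hermitianForm_eq]
    rcases eq_or_ne y 0 with rfl | hy
    · have hx : x ≠ 0 := by simpa using hxy
      simp only [mul_zero, sub_zero, norm_zero]
      have : (A : ℂ) * x ≠ 0 := mul_ne_zero (by exact_mod_cast hA.ne') hx
      positivity
    · have : 0 < (A * C - ‖W‖ ^ 2) * ‖y‖ ^ 2 := by positivity
      positivity

/-- For `z = !![a, b; b, c]` the Hermitian matrix `1 - zᴴ * z` has diagonal entries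
`defectDiag a b`, `defectDiag c b` and determinant `defectDet a b c`; `DefectPosDef a b c` says
that its trace and determinant are positive, i.e. that it is positive definite. -/
def defectDiag (a b : ℂ) : ℝ := 1 - ‖a‖ ^ 2 - ‖b‖ ^ 2

def defectDet (a b c : ℂ) : ℝ := 1 - ‖a‖ ^ 2 - 2 * ‖b‖ ^ 2 - ‖c‖ ^ 2 + ‖a * c - b ^ 2‖ ^ 2

def DefectPosDef (a b c : ℂ) : Prop := 0 < defectDiag a b + defectDiag c b ∧ 0 < defectDet a b c

lemma defectDiag_add_defectDiag_sub_defectDet (a b c : ℂ) :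
    defectDiag a b + defectDiag c b - defectDet a b c = 1 - ‖a * c - b ^ 2‖ ^ 2 := by
  simp only [defectDiag, defectDet]
  ring

lemma defectDet_eq (a b c : ℂ) :
    defectDet a b c = defectDiag a b * defectDiag c b - ‖a * conj b + b * conj c‖ ^ 2 := by
  simp only [defectDiag, defectDet, Complex.sq_norm]
  simp only [Complex.normSq_apply, Complex.mul_re, Complex.mul_im, Complex.sub_re, Complex.sub_im,
    Complex.add_re, Complex.add_im, Complex.conj_re, Complex.conj_im, pow_two]
  ring

lemma norm_sub_conj_mul_sq (a b c : ℂ) :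
    ‖c - conj a * (a * c - b ^ 2)‖ ^ 2 = defectDiag a b ^ 2 - (1 - ‖a‖ ^ 2) * defectDet a b c := by
  simp only [defectDiag, defectDet, Complex.sq_norm]
  simp only [Complex.normSq_apply, Complex.mul_re, Complex.mul_im, Complex.sub_re, Complex.sub_im,
    Complex.conj_re, Complex.conj_im, pow_two]
  ring

lemma norm_sq_add_norm_sq_sub (a b c x y : ℂ) :
    ‖x‖ ^ 2 + ‖y‖ ^ 2 - (‖a * x + b * y‖ ^ 2 + ‖b * x + c * y‖ ^ 2)
      = defectDiag a b * ‖x‖ ^ 2 + defectDiag c b * ‖y‖ ^ 2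
        - 2 * ((a * conj b + b * conj c) * x * conj y).re := by
  simp only [defectDiag, Complex.sq_norm, Complex.normSq_apply, Complex.mul_re,
    Complex.mul_im, Complex.add_re, Complex.add_im, Complex.conj_re, Complex.conj_im]
  ring

namespace DefectPosDef

variable {a b c : ℂ}

lemma defectDiag_pos (h : DefectPosDef a b c) : 0 < defectDiag a b ∧ 0 < defectDiag c b := by
  obtain ⟨htrace, hdet⟩ := h
  rw [defectDet_eq] at hdet
  constructor <;> nlinarith [sq_nonneg ‖a * conj b + b * conj c‖]

lemma norm_lt_one (h : DefectPosDef a b c) : ‖a‖ < 1 ∧ ‖b‖ < 1 ∧ ‖c‖ < 1 := by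
  obtain ⟨hab, hcb⟩ := h.defectDiag_pos
  simp only [defectDiag] at hab hcb
  refine ⟨?_, ?_, ?_⟩ <;> nlinarith [norm_nonneg a, norm_nonneg b, norm_nonneg c]

end DefectPosDef

lemma norm_toEuclideanCLM_apply_sq (a b c : ℂ) (x : EuclideanSpace ℂ (Fin 2)) :
    ‖Matrix.toEuclideanCLM (𝕜 := ℂ) !![a, b; b, c] x‖ ^ 2
      = ‖a * x 0 + b * x 1‖ ^ 2 + ‖b * x 0 + c * x 1‖ ^ 2 := by
  simp [EuclideanSpace.norm_sq_eq, Fin.sum_univ_two, Matrix.mulVec, dotProduct]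

lemma norm_toEuclideanCLM_lt_one_iff (a b c : ℂ) :
    ‖Matrix.toEuclideanCLM (𝕜 := ℂ) !![a, b; b, c]‖ < 1 ↔ DefectPosDef a b c := by
  have hnorm (x : EuclideanSpace ℂ (Fin 2)) :
      ‖Matrix.toEuclideanCLM (𝕜 := ℂ) !![a, b; b, c] x‖ < ‖x‖ ↔
        0 < defectDiag a b * ‖x 0‖ ^ 2 + defectDiag c b * ‖x 1‖ ^ 2
          - 2 * ((a * conj b + b * conj c) * x 0 * conj (x 1)).re := by
    have hx : ‖x‖ ^ 2 = ‖x 0‖ ^ 2 + ‖x 1‖ ^ 2 := by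
      simp [EuclideanSpace.norm_sq_eq, Fin.sum_univ_two]
    rw [← norm_sq_add_norm_sq_sub, ← norm_toEuclideanCLM_apply_sq, sub_pos, ← hx]
    exact (pow_lt_pow_iff_left₀ (norm_nonneg _) (norm_nonneg _) two_ne_zero).symm
  rw [ContinuousLinearMap.opNorm_lt_one_iff, DefectPosDef, defectDet_eq,
    ← hermitianForm_pos_iff]
  constructor
  · intro h x y hxy
    simpa using (hnorm !₂[x, y]).1 (h _ (by simpa [imp_iff_not_or] using hxy))
  · intro h x hx
    refine (hnorm x).2 (h _ _ ?_)
    contrapose! hx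
    ext i
    fin_cases i <;> simp [hx]

lemma norm_lt_one_of_mem_TetE {x : Fin 3 → ℂ} (hx : x ∈ TetE) :
    ‖x 0‖ < 1 ∧ ‖x 1‖ < 1 ∧ ‖x 2‖ < 1 := by
  have hx' : ‖x 0 - conj (x 1) * x 2‖ + ‖x 1 - conj (x 0) * x 2‖ + ‖x 2‖ ^ 2 < 1 := hx
  have hp := abs_norm_sub_norm_le (x 0) (conj (x 1) * x 2)
  have hq := abs_norm_sub_norm_le (x 1) (conj (x 0) * x 2)
  rw [norm_mul, Complex.norm_conj] at hp hq
  set u := ‖x 0‖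
  set v := ‖x 1‖
  set d := ‖x 2‖
  have hd0 : 0 ≤ d := norm_nonneg _
  have hd : d < 1 := by
    nlinarith [norm_nonneg (x 0 - conj (x 1) * x 2), norm_nonneg (x 1 - conj (x 0) * x 2)]
  -- `|u - v d| + |v - u d|` dominates both `(u + v)(1 - d)` and `|u - v|(1 + d)`
  have hsum : u + v < 1 + d := by
    nlinarith [le_abs_self (u - v * d), le_abs_self (v - u * d)]
  have hdiff₁ : u - v < 1 - d := by
    nlinarith [le_abs_self (u - v * d), neg_abs_le (v - u * d)]
  have hdiff₂ : v - u < 1 - d := by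
    nlinarith [neg_abs_le (u - v * d), le_abs_self (v - u * d)]
  exact ⟨by linarith, by linarith, hd⟩

lemma neg_defectDet_le {a c : ℂ} (b : ℂ) (ha : ‖a‖ ≤ 1) (hc : ‖c‖ ≤ 1) :
    -defectDet a b c ≤ 4 * ‖b‖ ^ 2 := by
  have hd := abs_norm_sub_norm_le (a * c) (b ^ 2)
  rw [norm_mul, norm_pow] at hd
  have hd2 : (‖a‖ * ‖c‖ - ‖b‖ ^ 2) ^ 2 ≤ ‖a * c - b ^ 2‖ ^ 2 :=
    sq_le_sq' (neg_le_of_abs_le hd) (le_of_abs_le hd)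
  have hac : ‖a‖ * ‖c‖ ≤ 1 := mul_le_one₀ ha (norm_nonneg c) hc
  simp only [defectDet]
  nlinarith [mul_nonneg (sub_nonneg.2 ha) (sub_nonneg.2 hc), norm_nonneg a, norm_nonneg c,
    sq_nonneg ‖b‖, mul_nonneg (sq_nonneg ‖b‖) (sub_nonneg.2 hac)]

lemma mem_TetE_iff_defectPosDef (a b c : ℂ) :
    ![a, c, a * c - b ^ 2] ∈ TetE ↔ DefectPosDef a b c := by
  have hmem : ![a, c, a * c - b ^ 2] ∈ TetE ↔ ‖a - conj c * (a * c - b ^ 2)‖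
      + ‖c - conj a * (a * c - b ^ 2)‖ + ‖a * c - b ^ 2‖ ^ 2 < 1 := Iff.rfl
  have hq : ‖c - conj a * (a * c - b ^ 2)‖ ^ 2
      = defectDiag a b ^ 2 - (defectDiag a b + ‖b‖ ^ 2) * defectDet a b c := by
    rw [norm_sub_conj_mul_sq, defectDiag]
    ring
  have hp : ‖a - conj c * (a * c - b ^ 2)‖ ^ 2
      = defectDiag c b ^ 2 - (defectDiag c b + ‖b‖ ^ 2) * defectDet a b c := by
    have h := norm_sub_conj_mul_sq c b a
    rw [mul_comm c a] at h
    rw [h, defectDiag, defectDet, defectDet, mul_comm c a]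
    ring
  have htrace := defectDiag_add_defectDiag_sub_defectDet a b c
  rw [hmem]
  constructor
  · intro h
    obtain ⟨ha, hc, hd⟩ := norm_lt_one_of_mem_TetE (hmem.2 h)
    have hΔ : 0 < defectDet a b c := by
      by_contra! hΔ
      have hb := neg_defectDet_le b ha.le hc.le
      have h1 := sub_half_le_of_sq_eq (norm_nonneg _) hΔ hb hq
      have h2 := sub_half_le_of_sq_eq (norm_nonneg _) hΔ hb hp
      linarith
    have hd2 : ‖a * c - b ^ 2‖ ^ 2 < 1 := pow_lt_one₀ (norm_nonneg _) hd two_ne_zero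
    exact ⟨by linarith, hΔ⟩
  · intro h
    obtain ⟨hA, hC⟩ := h.defectDiag_pos
    have h1 := lt_sub_half_of_sq_eq (norm_nonneg _) (sq_nonneg ‖b‖) hA h.2 hq
    have h2 := lt_sub_half_of_sq_eq (norm_nonneg _) (sq_nonneg ‖b‖) hC h.2 hp
    linarith

lemma Matrix.IsSymm.eq_of_fin_two {α : Type*} {z : Matrix (Fin 2) (Fin 2) α} (hz : z.IsSymm) :
    z = !![z 0 0, z 0 1; z 0 1, z 1 1] :=
  (Matrix.eta_fin_two z).trans (by rw [hz.apply 0 1])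

lemma tetraPi_of_symm (a b c : ℂ) : tetraPi !![a, b; b, c] = ![a, c, a * c - b ^ 2] := by
  simp [tetraPi, Matrix.det_fin_two_of, sq]

lemma of_symm_mem_RII_iff (a b c : ℂ) : !![a, b; b, c] ∈ RII ↔ DefectPosDef a b c := by
  rw [RII, mem_ofPred_eq, norm_toEuclideanCLM_lt_one_iff, and_iff_right_iff_imp]
  intro _
  ext i j
  fin_cases i <;> fin_cases j <;> rfl

lemma mem_RII_iff_mem_TetE {z : Matrix (Fin 2) (Fin 2) ℂ} (hz : z.IsSymm) :
    z ∈ RII ↔ tetraPi z ∈ TetE := by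
  rw [hz.eq_of_fin_two, of_symm_mem_RII_iff, tetraPi_of_symm, mem_TetE_iff_defectPosDef]

lemma mem_RII_and_tetraPi_eq_iff {x : Fin 3 → ℂ} (hx : x ∈ TetE) (z : Matrix (Fin 2) (Fin 2) ℂ) :
    z ∈ RII ∧ tetraPi z = x ↔ ∃ b, b ^ 2 = x 0 * x 1 - x 2 ∧ z = !![x 0, b; b, x 1] := by
  constructor
  · rintro ⟨hz, rfl⟩
    refine ⟨z 0 1, ?_, hz.1.eq_of_fin_two⟩
    rw [hz.1.eq_of_fin_two, tetraPi_of_symm]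
    simp
  · rintro ⟨b, hb, rfl⟩
    have hπ : tetraPi !![x 0, b; b, x 1] = x := by
      rw [tetraPi_of_symm, hb, sub_sub_cancel]
      ext i
      fin_cases i <;> rfl
    refine ⟨?_, hπ⟩
    rw [of_symm_mem_RII_iff, ← mem_TetE_iff_defectPosDef, ← tetraPi_of_symm, hπ]
    exact hx

lemma differentiable_tetraPi : Differentiable ℂ tetraPi := by
  refine differentiable_pi.2 fun i => ?_
  fin_cases i <;>
    simp only [tetraPi, Matrix.det_fin_two, Fin.zero_eta, Fin.mk_one, Fin.reduceFinMk,
      Matrix.cons_val_zero, Matrix.cons_val_one, Matrix.cons_val] <;>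
    fun_prop

lemma tetraPi_image_RII : tetraPi '' RII = TetE := by
  ext x
  constructor
  · rintro ⟨z, hz, rfl⟩
    exact (mem_RII_iff_mem_TetE hz.1).1 hz
  · intro hx
    obtain ⟨b, hb⟩ := IsAlgClosed.exists_pow_nat_eq (x 0 * x 1 - x 2) two_pos
    exact ⟨_, ((mem_RII_and_tetraPi_eq_iff hx _).2 ⟨b, hb, rfl⟩)⟩

lemma isBounded_RII : Bornology.IsBounded RII := by
  refine (Metric.isBounded_closedBall (x := 0) (r := 1)).subset fun z hz => ?_
  have hsymm := hz.1.eq_of_fin_two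
  rw [hsymm, of_symm_mem_RII_iff] at hz
  obtain ⟨ha, hb, hc⟩ := hz.norm_lt_one
  rw [mem_closedBall_zero_iff, Matrix.norm_le_iff zero_le_one, hsymm]
  simp [Fin.forall_fin_two, ha.le, hb.le, hc.le]

lemma isCompact_RII_inter_preimage {K : Set (Fin 3 → ℂ)} (hK : K ⊆ TetE) (hKc : IsCompact K) :
    IsCompact (RII ∩ tetraPi ⁻¹' K) := by
  have hsymm : RII ∩ tetraPi ⁻¹' K = {z | z.IsSymm} ∩ tetraPi ⁻¹' K := by
    ext z
    exact ⟨fun ⟨hz, hzK⟩ => ⟨hz.1, hzK⟩,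
      fun ⟨hz, hzK⟩ => ⟨(mem_RII_iff_mem_TetE hz).2 (hK hzK), hzK⟩⟩
  refine Metric.isCompact_of_isClosed_isBounded ?_ (isBounded_RII.subset inter_subset_left)
  rw [hsymm]
  exact (isClosed_eq (by fun_prop) continuous_id).inter
    (hKc.isClosed.preimage differentiable_tetraPi.continuous)

lemma RoyalT_subset_TetE : RoyalT ⊆ TetE := by
  rintro x ⟨h0, h1, -, h⟩
  have hx : x = ![x 0, x 1, x 0 * x 1 - 0 ^ 2] := by
    ext i
    fin_cases i <;> simp [h]
  rw [hx, mem_TetE_iff_defectPosDef]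
  simp only [DefectPosDef, defectDiag, defectDet, norm_zero, zero_pow two_ne_zero, mul_zero,
    sub_zero, norm_mul]
  have ha := sq_lt_one_iff₀ (norm_nonneg (x 0)) |>.2 (mem_ball_zero_iff.1 h0)
  have hc := sq_lt_one_iff₀ (norm_nonneg (x 1)) |>.2 (mem_ball_zero_iff.1 h1)
  constructor <;> nlinarith

lemma existsUnique_mem_RII_tetraPi_eq_iff {x : Fin 3 → ℂ} (hx : x ∈ TetE) :
    (∃! z, z ∈ RII ∧ tetraPi z = x) ↔ x 0 * x 1 = x 2 := by
  simp only [mem_RII_and_tetraPi_eq_iff hx]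
  constructor
  · rintro ⟨_, ⟨b, hb, rfl⟩, huniq⟩
    have hneg := congrFun (congrFun (huniq _ ⟨-b, by rw [neg_sq, hb], rfl⟩) 0) 1
    simp only [Matrix.of_apply, Matrix.cons_val', Matrix.cons_val_zero, Matrix.cons_val_one,
      Matrix.empty_val', Matrix.cons_val_fin_one, neg_eq_self] at hneg
    rw [hneg] at hb
    linear_combination -hb
  · intro h
    refine ⟨!![x 0, 0; 0, x 1], ⟨0, by rw [h]; ring, rfl⟩, ?_⟩
    rintro _ ⟨b, hb, rfl⟩
    rw [h, sub_self, pow_eq_zero_iff two_ne_zero] at hb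
    rw [hb]

lemma setOf_existsUnique_eq_RoyalT :
    {x | x ∈ TetE ∧ ∃! z, z ∈ RII ∧ tetraPi z = x} = RoyalT := by
  ext x
  constructor
  · rintro ⟨hx, huniq⟩
    obtain ⟨h0, h1, h2⟩ := norm_lt_one_of_mem_TetE hx
    exact ⟨mem_ball_zero_iff.2 h0, mem_ball_zero_iff.2 h1, mem_ball_zero_iff.2 h2,
      (existsUnique_mem_RII_tetraPi_eq_iff hx).1 huniq⟩
  · intro hx
    have hxE := RoyalT_subset_TetE hx
    exact ⟨hxE, (existsUnique_mem_RII_tetraPi_eq_iff hxE).2 hx.2.2.2⟩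

theorem stmt13 :
    (∀ z ∈ RII, tetraPi z ∈ TetE) ∧
    Differentiable ℂ tetraPi ∧
    tetraPi '' RII = TetE ∧
    (∀ K : Set (Fin 3 → ℂ), K ⊆ TetE → IsCompact K → IsCompact (RII ∩ tetraPi ⁻¹' K)) ∧
    {x | x ∈ TetE ∧ ∃! z, z ∈ RII ∧ tetraPi z = x} = RoyalT :=
  ⟨image_subset_iff.1 tetraPi_image_RII.subset, differentiable_tetraPi, tetraPi_image_RII,
    fun _ hK hKc => isCompact_RII_inter_preimage hK hKc, setOf_existsUnique_eq_RoyalT⟩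

end
end
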